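/- For every X ∈ a, the set W_{Ω,X} := {w ∈ W : wX has the same type as X} is a subgroup of W, and the vector X' := Σ_{w ∈ W_{Ω,X}} wX satisfies: (a) X' has the same type as X; (b) for every w ∈ W, wX' has the same type as X' if and only if wX' = X'; (c) every σ ∈ GL(a) with σ(X) = X and σ·W_{Ω,X}·σ⁻¹ = W_{Ω,X} satisfies σ(X') = X'. -/

import Mathlib

/-!
Having the type of `X` means that every `l ∈ Ω` takes a value of the same sign at `Y` as at `X`.
Since `Ω` is `W`-stable this relation is `W`-equivariant, which makes `W_{Ω,X}` a subgroup, and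
it is preserved by nonempty finite sums, which gives (a). Left translation permutes `W_{Ω,X}`,
so `X'` is fixed by it; conversely, if `wX'` has the type of `X'`, equivariance transports this
to `wX` having the type of `X`, which gives (b). For (c), `σX' = Σ (σwσ⁻¹)X` and conjugation by
`σ` permutes `W_{Ω,X}`.
-/

noncomputable section

/-- `Y` has the same type as `X` (relative to a finite set `Ω` of linear forms):
`Ω^>_Y = Ω^>_X` and `Ω^<_Y = Ω^<_X`. -/
def SameTypeD {V : Type*} [AddCommGroup V] [Module ℝ V]
    (Ω : Finset (Module.Dual ℝ V)) (X Y : V) : Prop :=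
  (∀ l ∈ Ω, (0 < l X ↔ 0 < l Y)) ∧ (∀ l ∈ Ω, (l X < 0 ↔ l Y < 0))

theorem sign_eq_sign_iff {α : Type*} [Zero α] [LinearOrder α] {a b : α} :
    SignType.sign a = SignType.sign b ↔ (0 < a ↔ 0 < b) ∧ (a < 0 ↔ b < 0) := by
  rcases lt_trichotomy a 0 with ha | rfl | ha <;> rcases lt_trichotomy b 0 with hb | rfl | hb <;>
    simp [sign_pos, sign_neg, *, lt_asymm]

namespace SameTypeD

variable {V : Type*} [AddCommGroup V] [Module ℝ V] {Ω : Finset (Module.Dual ℝ V)} {X Y Z : V}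

theorem iff_sign_eq :
    SameTypeD Ω X Y ↔ ∀ l ∈ Ω, SignType.sign (l X) = SignType.sign (l Y) := by
  simp only [sign_eq_sign_iff, SameTypeD, ← forall₂_and]

@[refl]
theorem refl (X : V) : SameTypeD Ω X X :=
  iff_sign_eq.2 fun _ _ => rfl

@[symm]
theorem symm (h : SameTypeD Ω X Y) : SameTypeD Ω Y X :=
  iff_sign_eq.2 fun l hl => (iff_sign_eq.1 h l hl).symm

@[trans]
theorem trans (hXY : SameTypeD Ω X Y) (hYZ : SameTypeD Ω Y Z) : SameTypeD Ω X Z :=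
  iff_sign_eq.2 fun l hl => (iff_sign_eq.1 hXY l hl).trans (iff_sign_eq.1 hYZ l hl)

theorem map {w : V →ₗ[ℝ] V} (hw : ∀ l ∈ Ω, l ∘ₗ w ∈ Ω) (h : SameTypeD Ω X Y) :
    SameTypeD Ω (w X) (w Y) :=
  iff_sign_eq.2 fun l hl => iff_sign_eq.1 h _ (hw l hl)

theorem finsum_mem {ι : Type*} {s : Set ι} (hs : s.Finite) (hne : s.Nonempty) {f : ι → V}
    (h : ∀ i ∈ s, SameTypeD Ω X (f i)) : SameTypeD Ω X (∑ᶠ i ∈ s, f i) := by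
  refine iff_sign_eq.2 fun l hl => ?_
  rw [finsum_mem_eq_finite_toFinset_sum _ hs, map_sum]
  exact (sign_sum (hs.toFinset_nonempty.2 hne) _
    fun i hi => (iff_sign_eq.1 (h i (hs.mem_toFinset.1 hi)) l hl).symm).symm

end SameTypeD

section OrbitSum

variable {G M : Type*} [Group G] [AddCommMonoid M] [DistribMulAction G M]

theorem smul_finsum_mem_subgroup_smul {H : Subgroup G} (hH : (H : Set G).Finite) {g : G}
    (hg : g ∈ H) (x : M) : g • ∑ᶠ h ∈ (H : Set G), h • x = ∑ᶠ h ∈ (H : Set G), h • x := by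
  have himg : (g * ·) '' (H : Set G) = H := by
    rw [Set.image_mul_left]
    ext h
    exact H.mul_mem_cancel_left (inv_mem hg)
  calc g • ∑ᶠ h ∈ (H : Set G), h • x = ∑ᶠ h ∈ (H : Set G), (g * h) • x := by
        simp only [smul_finsum_mem hH, mul_smul]
    _ = ∑ᶠ h ∈ (g * ·) '' (H : Set G), h • x :=
        (finsum_mem_image (f := (· • x)) (mul_right_injective g).injOn).symm
    _ = ∑ᶠ h ∈ (H : Set G), h • x := by rw [himg]

theorem smul_finsum_mem_smul_of_normalizes {s : Set G} (hs : s.Finite) {σ : G} {x : M}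
    (hx : σ • x = x) (hσ : (fun g => σ * g * σ⁻¹) '' s = s) :
    σ • ∑ᶠ g ∈ s, g • x = ∑ᶠ g ∈ s, g • x := by
  have hconj : Function.Injective fun g => σ * g * σ⁻¹ := fun a b h => by simpa using h
  calc σ • ∑ᶠ g ∈ s, g • x = ∑ᶠ g ∈ s, (σ * g * σ⁻¹) • x := by
        refine (smul_finsum_mem hs).trans (finsum_mem_congr rfl fun g _ => ?_)
        rw [mul_smul, mul_smul, inv_smul_eq_iff.2 hx.symm]
    _ = ∑ᶠ g ∈ (fun g => σ * g * σ⁻¹) '' s, g • x :=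
        (finsum_mem_image (f := (· • x)) hconj.injOn).symm
    _ = ∑ᶠ g ∈ s, g • x := by rw [hσ]

end OrbitSum

variable {V : Type*} [AddCommGroup V] [Module ℝ V] in
def typeStabilizer (W : Subgroup (V ≃ₗ[ℝ] V)) (Ω : Finset (Module.Dual ℝ V))
    (hΩ : ∀ w ∈ W, ∀ l ∈ Ω, l ∘ₗ (w : V →ₗ[ℝ] V) ∈ Ω) (X : V) : Subgroup (V ≃ₗ[ℝ] V) where
  carrier := {w | w ∈ W ∧ SameTypeD Ω X (w X)}
  one_mem' := ⟨W.one_mem, .refl X⟩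
  mul_mem' {u _} hu hv := ⟨W.mul_mem hu.1 hv.1, hu.2.trans (hv.2.map (hΩ u hu.1))⟩
  inv_mem' {u} hu := ⟨W.inv_mem hu.1, by simpa using (hu.2.map (hΩ _ (W.inv_mem hu.1))).symm⟩

theorem averaged_vector_of_type_stabilizer_general
    {V : Type*} [AddCommGroup V] [Module ℝ V]
    -- a finite subgroup `W` of `GL(V)`
    (W : Subgroup (V ≃ₗ[ℝ] V)) (hWfin : (W : Set (V ≃ₗ[ℝ] V)).Finite)
    -- a finite subset `Ω` of the dual space, stable under the action
    -- `(w·λ)(x) = λ(w⁻¹ x)` of `W`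
    (Ω : Finset (Module.Dual ℝ V))
    (hΩ : ∀ w ∈ W, ∀ l ∈ Ω, l ∘ₗ ((w⁻¹ : V ≃ₗ[ℝ] V) : V →ₗ[ℝ] V) ∈ Ω)
    (X : V) :
    ∃ W' : Subgroup (V ≃ₗ[ℝ] V),
      -- `W_{Ω,X}` is a subgroup of `W`
      (W' : Set (V ≃ₗ[ℝ] V)) = {w : V ≃ₗ[ℝ] V | w ∈ W ∧ SameTypeD Ω X (w X)} ∧
      ∀ X' : V,
        X' = (∑ᶠ w ∈ {w : V ≃ₗ[ℝ] V | w ∈ W ∧ SameTypeD Ω X (w X)}, w X) →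
        -- (a) `X'` has the same type as `X`
        SameTypeD Ω X X' ∧
        -- (b) for every `w ∈ W`, `wX'` has the same type as `X'` iff `wX' = X'`
        (∀ w ∈ W, (SameTypeD Ω X' (w X') ↔ w X' = X')) ∧
        -- (c) any `σ ∈ GL(V)` fixing `X` and normalizing `W_{Ω,X}` fixes `X'`
        (∀ σ : V ≃ₗ[ℝ] V, σ X = X →
          ((fun w => σ * w * σ⁻¹) ''
              {w : V ≃ₗ[ℝ] V | w ∈ W ∧ SameTypeD Ω X (w X)} =
            {w : V ≃ₗ[ℝ] V | w ∈ W ∧ SameTypeD Ω X (w X)}) →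
          σ X' = X') := by
  have hΩ' : ∀ w ∈ W, ∀ l ∈ Ω, l ∘ₗ (w : V →ₗ[ℝ] V) ∈ Ω := fun w hw l hl => by
    simpa using hΩ w⁻¹ (W.inv_mem hw) l hl
  set H := typeStabilizer W Ω hΩ' X
  have hH : (H : Set (V ≃ₗ[ℝ] V)).Finite := hWfin.subset fun _ hw => hw.1
  refine ⟨H, rfl, fun X' hX' => ?_⟩
  have hfix : ∀ w ∈ H, w X' = X' := fun w hw => hX' ▸ smul_finsum_mem_subgroup_smul hH hw X
  have hXX' : SameTypeD Ω X X' := hX' ▸ SameTypeD.finsum_mem hH ⟨1, H.one_mem⟩ fun w hw => hw.2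
  refine ⟨hXX', fun w hw => ⟨fun h => hfix w ⟨hw, ?_⟩, fun h => by rw [h]⟩,
    fun σ hσ hnorm => hX' ▸ smul_finsum_mem_smul_of_normalizes hH hσ hnorm⟩
  exact hXX'.trans (h.trans (hXX'.map (hΩ' w hw)).symm)

theorem averaged_vector_of_type_stabilizer
    {V : Type*} [AddCommGroup V] [Module ℝ V] [FiniteDimensional ℝ V]
    -- a finite subgroup `W` of `GL(V)`
    (W : Subgroup (V ≃ₗ[ℝ] V)) (hWfin : (W : Set (V ≃ₗ[ℝ] V)).Finite)
    -- a finite subset `Ω` of the dual space, stable under the action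
    -- `(w·λ)(x) = λ(w⁻¹ x)` of `W`
    (Ω : Finset (Module.Dual ℝ V))
    (hΩ : ∀ w ∈ W, ∀ l ∈ Ω, l ∘ₗ ((w⁻¹ : V ≃ₗ[ℝ] V) : V →ₗ[ℝ] V) ∈ Ω)
    (X : V) :
    ∃ W' : Subgroup (V ≃ₗ[ℝ] V),
      -- `W_{Ω,X}` is a subgroup of `W`
      (W' : Set (V ≃ₗ[ℝ] V)) = {w : V ≃ₗ[ℝ] V | w ∈ W ∧ SameTypeD Ω X (w X)} ∧
      ∀ X' : V,
        X' = (∑ᶠ w ∈ {w : V ≃ₗ[ℝ] V | w ∈ W ∧ SameTypeD Ω X (w X)}, w X) →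
        -- (a) `X'` has the same type as `X`
        SameTypeD Ω X X' ∧
        -- (b) for every `w ∈ W`, `wX'` has the same type as `X'` iff `wX' = X'`
        (∀ w ∈ W, (SameTypeD Ω X' (w X') ↔ w X' = X')) ∧
        -- (c) any `σ ∈ GL(V)` fixing `X` and normalizing `W_{Ω,X}` fixes `X'`
        (∀ σ : V ≃ₗ[ℝ] V, σ X = X →
          ((fun w => σ * w * σ⁻¹) ''
              {w : V ≃ₗ[ℝ] V | w ∈ W ∧ SameTypeD Ω X (w X)} =
            {w : V ≃ₗ[ℝ] V | w ∈ W ∧ SameTypeD Ω X (w X)}) →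
          σ X' = X') :=
  averaged_vector_of_type_stabilizer_general W hWfin Ω hΩ X

end
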